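/- arXiv:2403.07618 — 5 statements merged into one kernel-verified Lean document; each statement's English description precedes it below -/
import Mathlib

section
/- Let P ∈ ℝ^{n×n} be stochastic, Π ∈ ℝ^{m×m} stochastic, A ∈ ℝ^{m×n} arbitrary, π₀ a probability distribution on {1,…,m}, and p₀ a probability distribution on {1,…,n}. Then for all k ≥ 0, ‖π₀ᵀΠ^k A − p₀ᵀP^k‖₁ ≤ ‖π₀ᵀA − p₀ᵀ‖₁ + k·‖ΠA − AP‖_∞. -/
/-!
The defect `eₖ = π₀ Πᵏ A - p₀ Pᵏ` satisfies `eₖ₊₁ = (π₀ Πᵏ)(Π A - A P) + eₖ P`.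
Since `π₀ Πᵏ` is a probability vector, the first term has ℓ₁-norm at most `‖Π A - A P‖_∞`,
and right multiplication by the stochastic `P` does not increase the ℓ₁-norm; the bound
follows by induction on `k`.
-/

open Matrix BigOperators

noncomputable def l1 {n : ℕ} (v : Fin n → ℝ) : ℝ := ∑ i, |v i|

noncomputable def ninf {m n : ℕ} (A : Matrix (Fin m) (Fin n) ℝ) : ℝ :=
  ⨆ i, ∑ j, |A i j|

def IsStochastic {m n : ℕ} (A : Matrix (Fin m) (Fin n) ℝ) : Prop :=
  (∀ i j, 0 ≤ A i j) ∧ ∀ i, ∑ j, A i j = 1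

def IsGenerator {n : ℕ} (Q : Matrix (Fin n) (Fin n) ℝ) : Prop :=
  (∀ i j, i ≠ j → 0 ≤ Q i j) ∧ ∀ i, ∑ j, Q i j = 0

section Norms

variable {m n : ℕ}

lemma l1_nonneg (v : Fin n → ℝ) : 0 ≤ l1 v :=
  Finset.sum_nonneg fun i _ => abs_nonneg (v i)

lemma l1_add_le (v w : Fin n → ℝ) : l1 (v + w) ≤ l1 v + l1 w := by
  unfold l1
  rw [← Finset.sum_add_distrib]
  exact Finset.sum_le_sum fun i _ => abs_add_le _ _

lemma l1_eq_one_of_mem_stdSimplex {w : Fin n → ℝ} (hw : w ∈ stdSimplex ℝ (Fin n)) :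
    l1 w = 1 := by
  unfold l1
  simp_rw [abs_of_nonneg (hw.1 _)]
  exact hw.2

lemma sum_abs_le_ninf (B : Matrix (Fin m) (Fin n) ℝ) (i : Fin m) :
    ∑ j, |B i j| ≤ ninf B :=
  le_ciSup (f := fun i => ∑ j, |B i j|) (Set.finite_range _).bddAbove i

lemma l1_vecMul_le_mul_ninf (v : Fin m → ℝ) (B : Matrix (Fin m) (Fin n) ℝ) :
    l1 (v ᵥ* B) ≤ l1 v * ninf B :=
  calc ∑ j, |(v ᵥ* B) j| ≤ ∑ j, ∑ i, |v i| * |B i j| :=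
        Finset.sum_le_sum fun j _ => by
          simpa only [vecMul, dotProduct, abs_mul] using
            Finset.abs_sum_le_sum_abs (fun i => v i * B i j) Finset.univ
    _ = ∑ i, |v i| * ∑ j, |B i j| := by
        rw [Finset.sum_comm]
        simp only [Finset.mul_sum]
    _ ≤ ∑ i, |v i| * ninf B :=
        Finset.sum_le_sum fun i _ =>
          mul_le_mul_of_nonneg_left (sum_abs_le_ninf B i) (abs_nonneg _)
    _ = l1 v * ninf B := (Finset.sum_mul _ _ _).symm

end Norms

namespace IsStochastic

variable {m n : ℕ}

lemma iff_mem_rowStochastic {M : Matrix (Fin n) (Fin n) ℝ} :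
    IsStochastic M ↔ M ∈ rowStochastic ℝ (Fin n) :=
  mem_rowStochastic_iff_sum.symm

lemma pow {M : Matrix (Fin n) (Fin n) ℝ} (hM : IsStochastic M) (k : ℕ) :
    IsStochastic (M ^ k) :=
  iff_mem_rowStochastic.2 (pow_mem (iff_mem_rowStochastic.1 hM) k)

lemma ninf_le_one {M : Matrix (Fin m) (Fin n) ℝ} (hM : IsStochastic M) : ninf M ≤ 1 :=
  Real.iSup_le (fun i => by simp_rw [abs_of_nonneg (hM.1 i _), hM.2 i, le_refl]) zero_le_one

lemma l1_vecMul_le {M : Matrix (Fin m) (Fin n) ℝ} (hM : IsStochastic M) (v : Fin m → ℝ) :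
    l1 (v ᵥ* M) ≤ l1 v :=
  calc l1 (v ᵥ* M) ≤ l1 v * ninf M := l1_vecMul_le_mul_ninf v M
    _ ≤ l1 v := mul_le_of_le_one_right (l1_nonneg v) hM.ninf_le_one

lemma vecMul_mem_stdSimplex {M : Matrix (Fin m) (Fin n) ℝ} (hM : IsStochastic M)
    {w : Fin m → ℝ} (hw : w ∈ stdSimplex ℝ (Fin m)) : w ᵥ* M ∈ stdSimplex ℝ (Fin n) := by
  simp only [stdSimplex, Set.mem_ofPred_eq, vecMul, dotProduct]
  refine ⟨fun j => Finset.sum_nonneg fun i _ => mul_nonneg (hw.1 i) (hM.1 i j), ?_⟩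
  rw [Finset.sum_comm]
  simp only [← Finset.mul_sum, hM.2, mul_one, hw.2]

end IsStochastic

lemma vecMul_pow_succ_mul_sub_vecMul_pow_succ {R ι κ : Type*} [CommRing R]
    [Fintype ι] [DecidableEq ι] [Fintype κ] [DecidableEq κ]
    (Q : Matrix ι ι R) (A : Matrix ι κ R) (P : Matrix κ κ R) (π : ι → R) (p : κ → R)
    (k : ℕ) :
    π ᵥ* (Q ^ (k + 1) * A) - p ᵥ* P ^ (k + 1) =
      (π ᵥ* Q ^ k) ᵥ* (Q * A - A * P) + (π ᵥ* (Q ^ k * A) - p ᵥ* P ^ k) ᵥ* P := by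
  simp only [sub_vecMul, vecMul_sub, vecMul_vecMul, pow_succ, ← Matrix.mul_assoc]
  abel

theorem stmt_4_general {m n : ℕ} (P : Matrix (Fin n) (Fin n) ℝ) (hP : IsStochastic P)
    (Pm : Matrix (Fin m) (Fin m) ℝ) (hPm : IsStochastic Pm)
    (A : Matrix (Fin m) (Fin n) ℝ)
    (π₀ : Fin m → ℝ) (hπ₀ : (∀ χ, 0 ≤ π₀ χ) ∧ ∑ χ, π₀ χ = 1)
    (p₀ : Fin n → ℝ) (k : ℕ) :
    l1 (Matrix.vecMul π₀ (Pm ^ k * A) - Matrix.vecMul p₀ (P ^ k)) ≤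
      l1 (Matrix.vecMul π₀ A - p₀) + (k : ℝ) * ninf (Pm * A - A * P) := by
  induction k with
  | zero => simp
  | succ k ih =>
    have hπk : l1 (π₀ ᵥ* Pm ^ k) = 1 :=
      l1_eq_one_of_mem_stdSimplex ((hPm.pow k).vecMul_mem_stdSimplex hπ₀)
    have hstep := calc
      l1 (π₀ ᵥ* (Pm ^ (k + 1) * A) - p₀ ᵥ* P ^ (k + 1))
          ≤ l1 ((π₀ ᵥ* Pm ^ k) ᵥ* (Pm * A - A * P)) +
              l1 ((π₀ ᵥ* (Pm ^ k * A) - p₀ ᵥ* P ^ k) ᵥ* P) := by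
            rw [vecMul_pow_succ_mul_sub_vecMul_pow_succ]
            exact l1_add_le _ _
      _ ≤ ninf (Pm * A - A * P) + l1 (π₀ ᵥ* (Pm ^ k * A) - p₀ ᵥ* P ^ k) := by
            gcongr
            · simpa [hπk] using l1_vecMul_le_mul_ninf (π₀ ᵥ* Pm ^ k) (Pm * A - A * P)
            · exact hP.l1_vecMul_le _
    push_cast
    linarith

theorem stmt_4 {m n : ℕ} (P : Matrix (Fin n) (Fin n) ℝ) (hP : IsStochastic P)
    (Pm : Matrix (Fin m) (Fin m) ℝ) (hPm : IsStochastic Pm)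
    (A : Matrix (Fin m) (Fin n) ℝ)
    (π₀ : Fin m → ℝ) (hπ₀ : (∀ χ, 0 ≤ π₀ χ) ∧ ∑ χ, π₀ χ = 1)
    (p₀ : Fin n → ℝ) (hp₀ : (∀ i, 0 ≤ p₀ i) ∧ ∑ i, p₀ i = 1) (k : ℕ) :
    l1 (Matrix.vecMul π₀ (Pm ^ k * A) - Matrix.vecMul p₀ (P ^ k)) ≤
      l1 (Matrix.vecMul π₀ A - p₀) + (k : ℝ) * ninf (Pm * A - A * P) :=
  stmt_4_general P hP Pm hPm A π₀ hπ₀ p₀ k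
end

section
/- Assume ΠA = AP with P stochastic, and assume π₀ᵀA ≥ p₀ᵀ entrywise (or π₀ᵀA ≤ p₀ᵀ entrywise). Then for all k ≥ 0, ‖π₀ᵀΠ^k A − p₀ᵀP^k‖₁ = ‖π₀ᵀA − p₀ᵀ‖₁. Moreover, if π₀ᵀA ≥ p₀ᵀ entrywise, then π₀ᵀΠ^k A ≥ p₀ᵀP^k entrywise for all k. -/
open Matrix BigOperators

/-! Iterating `ΠA = AP` gives `π₀ᵀΠᵏA - p₀ᵀPᵏ = (π₀ᵀA - p₀ᵀ)Pᵏ`. The stochastic matrix `Pᵏ`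
maps a vector of constant sign to one of the same sign and the same coordinate sum, so it
preserves the ℓ₁ norm of such a vector. -/

theorem IsStochastic.mem_rowStochastic {n : ℕ} {P : Matrix (Fin n) (Fin n) ℝ}
    (hP : IsStochastic P) : P ∈ rowStochastic ℝ (Fin n) :=
  mem_rowStochastic_iff_sum.2 hP

theorem Matrix.pow_mul_eq_mul_pow_of_mul_eq {ι κ R : Type*} [Fintype ι] [DecidableEq ι]
    [Fintype κ] [DecidableEq κ] [Semiring R] {Q : Matrix ι ι R} {A : Matrix ι κ R}
    {P : Matrix κ κ R} (h : Q * A = A * P) (k : ℕ) : Q ^ k * A = A * P ^ k := by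
  induction k with
  | zero => simp
  | succ k ih => rw [pow_succ', Matrix.mul_assoc, ih, ← Matrix.mul_assoc, h, Matrix.mul_assoc,
      ← pow_succ']

theorem l1_neg {n : ℕ} (x : Fin n → ℝ) : l1 (-x) = l1 x := by
  simp [l1]

theorem l1_vecMul_of_nonneg {n : ℕ} {M : Matrix (Fin n) (Fin n) ℝ}
    (hM : M ∈ rowStochastic ℝ (Fin n)) {x : Fin n → ℝ} (hx : ∀ i, 0 ≤ x i) :
    l1 (x ᵥ* M) = l1 x := by
  have hxM := nonneg_vecMul_of_mem_rowStochastic hM hx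
  simp only [l1, abs_of_nonneg (hxM _), abs_of_nonneg (hx _), ← dotProduct_one]
  rw [← dotProduct_mulVec, one_vecMul_of_mem_rowStochastic hM]

theorem l1_vecMul_of_nonpos {n : ℕ} {M : Matrix (Fin n) (Fin n) ℝ}
    (hM : M ∈ rowStochastic ℝ (Fin n)) {x : Fin n → ℝ} (hx : ∀ i, x i ≤ 0) :
    l1 (x ᵥ* M) = l1 x := by
  rw [← l1_neg, ← neg_vecMul,
    l1_vecMul_of_nonneg (x := -x) hM fun i => neg_nonneg.2 (hx i), l1_neg]

theorem vecMul_pow_mul_sub_vecMul_pow {ι κ R : Type*} [Fintype ι] [DecidableEq ι]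
    [Fintype κ] [DecidableEq κ] [Ring R] {Q : Matrix ι ι R} {A : Matrix ι κ R}
    {P : Matrix κ κ R} (h : Q * A = A * P) (π₀ : ι → R) (p₀ : κ → R) (k : ℕ) :
    π₀ ᵥ* (Q ^ k * A) - p₀ ᵥ* (P ^ k) = (π₀ ᵥ* A - p₀) ᵥ* (P ^ k) := by
  rw [pow_mul_eq_mul_pow_of_mul_eq h, sub_vecMul, vecMul_vecMul]

theorem stmt_10 {m n : ℕ} (P : Matrix (Fin n) (Fin n) ℝ) (hP : IsStochastic P)
    (Pm : Matrix (Fin m) (Fin m) ℝ) (A : Matrix (Fin m) (Fin n) ℝ)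
    (hdyn : Pm * A = A * P) (π₀ : Fin m → ℝ) (p₀ : Fin n → ℝ)
    (hord : (∀ i, p₀ i ≤ Matrix.vecMul π₀ A i) ∨ (∀ i, Matrix.vecMul π₀ A i ≤ p₀ i)) :
    (∀ k : ℕ, l1 (Matrix.vecMul π₀ (Pm ^ k * A) - Matrix.vecMul p₀ (P ^ k)) =
        l1 (Matrix.vecMul π₀ A - p₀)) ∧
    ((∀ i, p₀ i ≤ Matrix.vecMul π₀ A i) →
      ∀ (k : ℕ) (i : Fin n),
        Matrix.vecMul p₀ (P ^ k) i ≤ Matrix.vecMul π₀ (Pm ^ k * A) i) := by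
  have hPk (k : ℕ) : P ^ k ∈ rowStochastic ℝ (Fin n) := pow_mem hP.mem_rowStochastic k
  have hdefect := vecMul_pow_mul_sub_vecMul_pow hdyn π₀ p₀
  refine ⟨fun k => ?_, fun hge k i => ?_⟩
  · rw [hdefect]
    rcases hord with hge | hle
    · exact l1_vecMul_of_nonneg (hPk k) fun i => sub_nonneg.2 (hge i)
    · exact l1_vecMul_of_nonpos (hPk k) fun i => sub_nonpos.2 (hle i)
  · have hnonneg := nonneg_vecMul_of_mem_rowStochastic (x := π₀ ᵥ* A - p₀) (hPk k)
      (fun j => sub_nonneg.2 (hge j)) i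
    rwa [← hdefect, Pi.sub_apply, sub_nonneg] at hnonneg
end

section
/- Let P be stochastic on state space S with partition Ω and distributions α_σ supported on σ ∈ Ω. Suppose the pair (Ω, α) is deflatable: for all r, s ∈ S, P(r,s) = α(s)·Σ_{s'∈ω(s)} P(r,s'), where ω(s) is the block containing s and α(s) = α_{ω(s)}(s). Then with Π = APΛ one has ΠA = AP. -/
open Matrix BigOperators

/-- indicator (aggregation) matrix Λ of a partition given by `ω`. -/
def indΛ {n m : ℕ} (ω : Fin n → Fin m) : Matrix (Fin n) (Fin m) ℝ :=
  fun s σ => if ω s = σ then 1 else 0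

/-- size of the block of `ρ`. -/
def blockCard {n m : ℕ} (ω : Fin n → Fin m) (ρ : Fin m) : ℕ :=
  (Finset.univ.filter fun s => ω s = ρ).card

/-- disaggregation matrix with uniform α distributions. -/
noncomputable def uniformA {n m : ℕ} (ω : Fin n → Fin m) : Matrix (Fin m) (Fin n) ℝ :=
  fun σ s => if ω s = σ then ((blockCard ω σ : ℝ))⁻¹ else 0

/-- disaggregation matrix with rows the α distributions. -/
def weightA {n m : ℕ} (ω : Fin n → Fin m) (α : Fin n → ℝ) : Matrix (Fin m) (Fin n) ℝ :=
  fun σ s => if ω s = σ then α s else 0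

section Aggregation

variable {ι : Type*} {n m : ℕ} (ω : Fin n → Fin m)

theorem mul_indΛ_apply (M : Matrix ι (Fin n) ℝ) (i : ι) (σ : Fin m) :
    (M * indΛ ω) i σ = ∑ s ∈ Finset.univ.filter (fun s => ω s = σ), M i s := by
  simp [Matrix.mul_apply, indΛ, Finset.sum_filter]

theorem mul_weightA_apply (α : Fin n → ℝ) (M : Matrix ι (Fin m) ℝ) (i : ι) (s : Fin n) :
    (M * weightA ω α) i s = M i (ω s) * α s := by
  simp [Matrix.mul_apply, weightA]

/-- Deflatability says exactly that `P Λ A = P`. -/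
theorem mul_indΛ_mul_weightA_of_deflatable (P : Matrix (Fin n) (Fin n) ℝ) (α : Fin n → ℝ)
    (hdefl : ∀ r s, P r s =
      α s * ∑ s' ∈ Finset.univ.filter (fun s' => ω s' = ω s), P r s') :
    P * indΛ ω * weightA ω α = P := by
  ext r s
  rw [mul_weightA_apply, mul_indΛ_apply, hdefl r s, mul_comm]

end Aggregation

theorem stmt_16_general {n m : ℕ} (ω : Fin n → Fin m)
    (P : Matrix (Fin n) (Fin n) ℝ)
    (α : Fin n → ℝ)
    (hdefl : ∀ r s, P r s =
      α s * ∑ s' ∈ Finset.univ.filter (fun s' => ω s' = ω s), P r s') :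
    (weightA ω α * P * indΛ ω) * weightA ω α = weightA ω α * P := by
  rw [Matrix.mul_assoc (weightA ω α), Matrix.mul_assoc (weightA ω α),
    mul_indΛ_mul_weightA_of_deflatable ω P α hdefl]

theorem stmt_16 {n m : ℕ} (ω : Fin n → Fin m)
    (P : Matrix (Fin n) (Fin n) ℝ) (hP : IsStochastic P)
    (α : Fin n → ℝ) (hα0 : ∀ s, 0 ≤ α s)
    (hαsum : ∀ σ : Fin m, ∑ s ∈ Finset.univ.filter (fun s => ω s = σ), α s = 1)
    (hdefl : ∀ r s, P r s =
      α s * ∑ s' ∈ Finset.univ.filter (fun s' => ω s' = ω s), P r s') :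
    (weightA ω α * P * indΛ ω) * weightA ω α = weightA ω α * P :=
  stmt_16_general ω P α hdefl
end

section
/- Let Q be a generator matrix on state space S, Ω a partition of S, A the disaggregation matrix with rows α_σ, Λ the indicator matrix of the partition (AΛ = I), and Θ ∈ ℝ^{m×m} with ΘA = AQ. If the initial distribution p₀ satisfies p₀ᵀΛA = p₀ᵀ (compatibility with the α distributions), then for all t ≥ 0, p₀ᵀe^{Qt}Λ = p₀ᵀΛe^{Θt}; i.e., the aggregated process is a Markov chain with generator Θ (weak lumpability). -/
open Matrix BigOperators

/-!
Since `ΘA = AQ`, also `Θᵏ A = A Qᵏ` for all `k`, and summing the exponential series gives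
`e^{Θt} A = A e^{Qt}`. Compatibility `p₀ᵀ Λ A = p₀ᵀ` then lets us insert `ΛA` in front of
`e^{Qt}`, and `AΛ = I` collapses `p₀ᵀ Λ (A e^{Qt}) Λ = p₀ᵀ Λ e^{Θt} A Λ` to `p₀ᵀ Λ e^{Θt}`.
-/

namespace Matrix

variable {ι κ : Type*} [Fintype ι] [Fintype κ] [DecidableEq ι] [DecidableEq κ]

theorem pow_mul_eq_mul_pow_of_mul_eq_s17 {R : Type*} [Semiring R] {Θ : Matrix ι ι R}
    {A : Matrix ι κ R} {Q : Matrix κ κ R} (h : Θ * A = A * Q) (k : ℕ) :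
    Θ ^ k * A = A * Q ^ k := by
  induction k with
  | zero => simp
  | succ k ih => rw [pow_succ, pow_succ, Matrix.mul_assoc, h, ← Matrix.mul_assoc, ih,
      Matrix.mul_assoc]

-- Any submultiplicative norm makes the series converge; the limit only depends on the topology.
theorem hasSum_exp_series {𝕂 : Type*} [RCLike 𝕂] (M : Matrix ι ι 𝕂) :
    HasSum (fun k => (k.factorial⁻¹ : 𝕂) • M ^ k) (NormedSpace.exp M) := by
  open scoped Norms.Operator in exact NormedSpace.exp_series_hasSum_exp' M

theorem exp_mul_eq_mul_exp_of_mul_eq {𝕂 : Type*} [RCLike 𝕂] {Θ : Matrix ι ι 𝕂}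
    {A : Matrix ι κ 𝕂} {Q : Matrix κ κ 𝕂} (h : Θ * A = A * Q) :
    NormedSpace.exp Θ * A = A * NormedSpace.exp Q := by
  have hΘ := (hasSum_exp_series Θ).map (mulRightLinearMap ι 𝕂 A)
    (continuous_id.matrix_mul continuous_const)
  have hQ := (hasSum_exp_series Q).map (mulLeftLinearMap κ 𝕂 A)
    (continuous_const.matrix_mul continuous_id)
  refine hΘ.unique ?_
  simpa [Function.comp_def, Matrix.smul_mul, Matrix.mul_smul,
    pow_mul_eq_mul_pow_of_mul_eq_s17 h] using hQ

end Matrix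

theorem vecMul_exp_mul_eq_vecMul_mul_exp {ι κ 𝕂 : Type*} [Fintype ι] [Fintype κ]
    [DecidableEq ι] [DecidableEq κ] [RCLike 𝕂] {Λ : Matrix ι κ 𝕂} {A : Matrix κ ι 𝕂}
    {Q : Matrix ι ι 𝕂} {Θ : Matrix κ κ 𝕂} (hAΛ : A * Λ = 1) (hΘ : Θ * A = A * Q)
    {p : ι → 𝕂} (hp : vecMul p (Λ * A) = p) :
    vecMul (vecMul p (NormedSpace.exp Q)) Λ = vecMul (vecMul p Λ) (NormedSpace.exp Θ) := by
  calc vecMul (vecMul p (NormedSpace.exp Q)) Λ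
      = vecMul p (Λ * (A * NormedSpace.exp Q) * Λ) := by
        conv_lhs => rw [← hp]
        simp only [vecMul_vecMul, Matrix.mul_assoc]
    _ = vecMul p (Λ * NormedSpace.exp Θ * (A * Λ)) := by
        simp only [← Matrix.exp_mul_eq_mul_exp_of_mul_eq hΘ, Matrix.mul_assoc]
    _ = vecMul (vecMul p Λ) (NormedSpace.exp Θ) := by
        rw [hAΛ, Matrix.mul_one, vecMul_vecMul]

theorem stmt_17_general {n m : ℕ} (ω : Fin n → Fin m)
    (Q : Matrix (Fin n) (Fin n) ℝ)
    (α : Fin n → ℝ)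
    (hAL : weightA ω α * indΛ ω = 1)
    (Θ : Matrix (Fin m) (Fin m) ℝ) (hdyn : Θ * weightA ω α = weightA ω α * Q)
    (p₀ : Fin n → ℝ)
    (hcompat : Matrix.vecMul p₀ (indΛ ω * weightA ω α) = p₀)
    (t : ℝ) :
    Matrix.vecMul (Matrix.vecMul p₀ (NormedSpace.exp (t • Q))) (indΛ ω) =
      Matrix.vecMul (Matrix.vecMul p₀ (indΛ ω)) (NormedSpace.exp (t • Θ)) :=
  vecMul_exp_mul_eq_vecMul_mul_exp hAL
    (by rw [Matrix.smul_mul, Matrix.mul_smul, hdyn]) hcompat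

theorem stmt_17 {n m : ℕ} (ω : Fin n → Fin m)
    (Q : Matrix (Fin n) (Fin n) ℝ) (hQ : IsGenerator Q)
    (α : Fin n → ℝ) (hα0 : ∀ s, 0 ≤ α s)
    (hαsum : ∀ σ : Fin m, ∑ s ∈ Finset.univ.filter (fun s => ω s = σ), α s = 1)
    (hAL : weightA ω α * indΛ ω = 1)
    (Θ : Matrix (Fin m) (Fin m) ℝ) (hdyn : Θ * weightA ω α = weightA ω α * Q)
    (p₀ : Fin n → ℝ) (hp₀ : (∀ s, 0 ≤ p₀ s) ∧ ∑ s, p₀ s = 1)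
    (hcompat : Matrix.vecMul p₀ (indΛ ω * weightA ω α) = p₀)
    (t : ℝ) (ht : 0 ≤ t) :
    Matrix.vecMul (Matrix.vecMul p₀ (NormedSpace.exp (t • Q))) (indΛ ω) =
      Matrix.vecMul (Matrix.vecMul p₀ (indΛ ω)) (NormedSpace.exp (t • Θ)) :=
  stmt_17_general ω Q α hAL Θ hdyn p₀ hcompat t
end

section
/- Let Ω be a partition of the state space of a stochastic matrix P that is ε-almost exactly lumpable: for all s, s' in the same block, Σ_{ρ∈Ω} |Σ_{r∈ρ} P(r,s) − Σ_{r∈ρ} P(r,s')| ≤ ε. With uniform α (α(s) = 1/|ω(s)|), disaggregation matrix A, indicator matrix Λ, and Π = APΛ, it holds that ‖ΠA − AP‖_∞ ≤ |Ω| · (max_{ρ∈Ω}|ρ| − 1)/(min_{ρ∈Ω}|ρ|) · ε. -/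
open Matrix BigOperators

/-!
Write `AP = uniformA ω * P`. Since `Λ A` replaces each entry of a row by its average over the
block of its column, the row `σ` of `Π A - A P = (A P) Λ A - A P` collects the deviations of the
row `σ` of `A P` from its block averages. Within a block these entries differ by at most
`ε / |σ|` by almost exact lumpability, and a deviation from the average over a block `ρ` is at
most `(|ρ| - 1) / |ρ|` times that, because the term of the state itself vanishes. Summing over
the states of all blocks bounds the row sum by `|Ω| (max |ρ| - 1) ε / min |ρ|`.
-/

open Finset

lemma abs_sum_div_card_sub_le {ι : Type*} {S : Finset ι} {g : ι → ℝ} {δ : ℝ} {s : ι}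
    (hs : s ∈ S) (h : ∀ t ∈ S, |g t - g s| ≤ δ) :
    |(∑ t ∈ S, g t) / #S - g s| ≤ (#S - 1) / #S * δ := by
  classical
  have hS : (0 : ℝ) < #S := Nat.cast_pos.2 (card_pos.2 ⟨s, hs⟩)
  have hmean : (∑ t ∈ S, g t) / #S - g s = (∑ t ∈ S.erase s, (g t - g s)) / #S := by
    rw [sum_erase S (f := fun t => g t - g s) (sub_self _), sum_sub_distrib, sum_const,
      nsmul_eq_mul]
    field_simp
  have hsum : |∑ t ∈ S.erase s, (g t - g s)| ≤ (#S - 1) * δ := calc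
    |∑ t ∈ S.erase s, (g t - g s)| ≤ ∑ t ∈ S.erase s, |g t - g s| := abs_sum_le_sum_abs _ _
    _ ≤ ∑ _t ∈ S.erase s, δ := sum_le_sum fun t ht => h t (mem_of_mem_erase ht)
    _ = (#S - 1) * δ := by
      rw [sum_const, card_erase_of_mem hs, nsmul_eq_mul, Nat.cast_pred (card_pos.2 ⟨s, hs⟩)]
  rw [hmean, abs_div, Nat.abs_cast, div_mul_eq_mul_div]
  gcongr

lemma sum_abs_sum_div_card_sub_le {ι : Type*} {S : Finset ι} {g : ι → ℝ} {δ : ℝ}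
    (hS : S.Nonempty) (h : ∀ s ∈ S, ∀ t ∈ S, |g t - g s| ≤ δ) :
    ∑ s ∈ S, |(∑ t ∈ S, g t) / #S - g s| ≤ (#S - 1) * δ := calc
  ∑ s ∈ S, |(∑ t ∈ S, g t) / #S - g s| ≤ ∑ _s ∈ S, (#S - 1) / #S * δ :=
    sum_le_sum fun s hs => abs_sum_div_card_sub_le hs (h s hs)
  _ = (#S - 1) * δ := by
    have : (#S : ℝ) ≠ 0 := Nat.cast_ne_zero.2 hS.card_pos.ne'
    rw [sum_const, nsmul_eq_mul]
    field_simp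

section Partition

variable {n m : ℕ} (ω : Fin n → Fin m)

def block (ρ : Fin m) : Finset (Fin n) := univ.filter fun s => ω s = ρ

@[simp] lemma mem_block {ρ : Fin m} {s : Fin n} : s ∈ block ω ρ ↔ ω s = ρ := by
  simp [block]

lemma card_block (ρ : Fin m) : #(block ω ρ) = blockCard ω ρ := rfl

lemma blockCard_pos (hω : Function.Surjective ω) (ρ : Fin m) : 0 < blockCard ω ρ := by
  obtain ⟨s, rfl⟩ := hω ρ
  exact card_pos.2 ⟨s, (mem_block ω).2 rfl⟩

noncomputable def blockAverage (v : Fin n → ℝ) (ρ : Fin m) : ℝ :=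
  (∑ t ∈ block ω ρ, v t) / blockCard ω ρ

lemma sum_abs_blockAverage_sub_le (hω : Function.Surjective ω) {v : Fin n → ℝ} {δ : ℝ}
    (hv : ∀ s t, ω s = ω t → |v t - v s| ≤ δ) :
    ∑ s, |blockAverage ω v (ω s) - v s| ≤ ∑ ρ, ((blockCard ω ρ : ℝ) - 1) * δ := by
  rw [← sum_fiberwise univ ω]
  gcongr with ρ
  calc ∑ s ∈ block ω ρ, |blockAverage ω v (ω s) - v s|
      = ∑ s ∈ block ω ρ, |(∑ t ∈ block ω ρ, v t) / #(block ω ρ) - v s| :=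
        sum_congr rfl fun s hs => by rw [(mem_block ω).1 hs, blockAverage, card_block]
    _ ≤ _ := sum_abs_sum_div_card_sub_le (card_pos.1 (blockCard_pos ω hω ρ))
        fun s hs t ht => hv s t (((mem_block ω).1 hs).trans ((mem_block ω).1 ht).symm)

lemma indΛ_mul_uniformA_apply (t s : Fin n) :
    (indΛ ω * uniformA ω) t s = if ω t = ω s then (blockCard ω (ω s) : ℝ)⁻¹ else 0 := by
  simp [mul_apply, indΛ, uniformA, eq_comm]

lemma mul_indΛ_mul_uniformA_apply {k : ℕ} (M : Matrix (Fin k) (Fin n) ℝ) (i : Fin k)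
    (s : Fin n) : (M * indΛ ω * uniformA ω) i s = blockAverage ω (M i) (ω s) := by
  rw [Matrix.mul_assoc, mul_apply]
  simp [indΛ_mul_uniformA_apply, blockAverage, block, sum_filter, div_eq_mul_inv, sum_mul]

lemma uniformA_mul_apply {k : ℕ} (P : Matrix (Fin n) (Fin k) ℝ) (σ : Fin m) (s : Fin k) :
    (uniformA ω * P) σ s = (blockCard ω σ : ℝ)⁻¹ * ∑ r ∈ block ω σ, P r s := by
  simp [mul_apply, uniformA, block, sum_filter, mul_sum]

def IsAlmostExactlyLumpable (P : Matrix (Fin n) (Fin n) ℝ) (ε : ℝ) : Prop :=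
  ∀ s s', ω s = ω s' → ∑ ρ, |∑ r ∈ block ω ρ, P r s - ∑ r ∈ block ω ρ, P r s'| ≤ ε

variable {ω}

lemma IsAlmostExactlyLumpable.abs_uniformA_mul_sub_le {P : Matrix (Fin n) (Fin n) ℝ} {ε : ℝ}
    (h : IsAlmostExactlyLumpable ω P ε) (σ : Fin m) {s t : Fin n} (hst : ω s = ω t) :
    |(uniformA ω * P) σ t - (uniformA ω * P) σ s| ≤ (blockCard ω σ : ℝ)⁻¹ * ε := by
  rw [uniformA_mul_apply, uniformA_mul_apply, ← mul_sub, abs_mul, abs_inv, Nat.abs_cast]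
  gcongr
  exact (single_le_sum (fun ρ _ => abs_nonneg _) (mem_univ σ)).trans (h t s hst.symm)

lemma IsAlmostExactlyLumpable.sum_abs_row_le (hω : Function.Surjective ω)
    {P : Matrix (Fin n) (Fin n) ℝ} {ε : ℝ} (h : IsAlmostExactlyLumpable ω P ε) (σ : Fin m) :
    ∑ s, |(uniformA ω * P * indΛ ω * uniformA ω - uniformA ω * P) σ s| ≤
      ∑ ρ, ((blockCard ω ρ : ℝ) - 1) * ((blockCard ω σ : ℝ)⁻¹ * ε) := by
  simp only [Matrix.sub_apply, mul_indΛ_mul_uniformA_apply]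
  exact sum_abs_blockAverage_sub_le ω hω fun s t hst => h.abs_uniformA_mul_sub_le σ hst

end Partition

theorem stmt_18_general {n m : ℕ} (hm : 0 < m) (ω : Fin n → Fin m) (hω : Function.Surjective ω)
    (P : Matrix (Fin n) (Fin n) ℝ)
    (ε : ℝ) (hε : 0 ≤ ε)
    (hlump : ∀ s s', ω s = ω s' →
      ∑ ρ : Fin m, |(∑ r ∈ Finset.univ.filter (fun r => ω r = ρ), P r s) -
        ∑ r ∈ Finset.univ.filter (fun r => ω r = ρ), P r s'| ≤ ε) :
    ninf (uniformA ω * P * indΛ ω * uniformA ω - uniformA ω * P) ≤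
      (m : ℝ) * (((⨆ ρ : Fin m, (blockCard ω ρ : ℝ)) - 1) /
        (⨅ ρ : Fin m, (blockCard ω ρ : ℝ))) * ε := by
  have : Nonempty (Fin m) := ⟨⟨0, hm⟩⟩
  have hone : ∀ ρ, (1 : ℝ) ≤ blockCard ω ρ := fun ρ => Nat.one_le_cast.2 (blockCard_pos ω hω ρ)
  have hbdd := Set.finite_range fun ρ => (blockCard ω ρ : ℝ)
  refine ciSup_le fun σ => (IsAlmostExactlyLumpable.sum_abs_row_le hω hlump σ).trans ?_
  calc ∑ ρ, ((blockCard ω ρ : ℝ) - 1) * ((blockCard ω σ : ℝ)⁻¹ * ε)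
      ≤ ∑ _ρ : Fin m,
          ((⨆ ρ, (blockCard ω ρ : ℝ)) - 1) * ((⨅ ρ, (blockCard ω ρ : ℝ))⁻¹ * ε) := by
        gcongr with ρ
        · exact sub_nonneg.2 ((hone ρ).trans (le_ciSup hbdd.bddAbove ρ))
        · exact le_ciSup hbdd.bddAbove ρ
        · exact one_pos.trans_le (le_ciInf hone)
        · exact ciInf_le hbdd.bddBelow σ
    _ = _ := by rw [sum_const, card_univ, Fintype.card_fin, nsmul_eq_mul]; ring

theorem stmt_18 {n m : ℕ} (hm : 0 < m) (ω : Fin n → Fin m) (hω : Function.Surjective ω)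
    (P : Matrix (Fin n) (Fin n) ℝ) (hP : IsStochastic P)
    (ε : ℝ) (hε : 0 ≤ ε)
    (hlump : ∀ s s', ω s = ω s' →
      ∑ ρ : Fin m, |(∑ r ∈ Finset.univ.filter (fun r => ω r = ρ), P r s) -
        ∑ r ∈ Finset.univ.filter (fun r => ω r = ρ), P r s'| ≤ ε) :
    ninf (uniformA ω * P * indΛ ω * uniformA ω - uniformA ω * P) ≤
      (m : ℝ) * (((⨆ ρ : Fin m, (blockCard ω ρ : ℝ)) - 1) /
        (⨅ ρ : Fin m, (blockCard ω ρ : ℝ))) * ε :=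
  stmt_18_general hm ω hω P ε hε hlump
end
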